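/- arXiv:1108.3253 — 3 statements merged into one kernel-verified Lean document; each statement's English description precedes it below -/
import Mathlib

section
/- Let x₀ ∈ X and let S be a basis of open neighborhoods of x₀, directed by reverse inclusion. Suppose for each V ∈ S, α_V : [0,1] → X is a path with α_V(0) = x₀ and image contained in V. Then the induced wedge map α : ⋁_{V∈S}(I_V, 0) → X from the arc-hedgehog over S to X is continuous. -/
open unitInterval Topology

set_option linter.unnecessarySimpa false

universe u v w

/-- `p : E → B` is an arc-covering: unique lifting of paths given the initial point. -/
def IsArcCovering {E : Type*} {B : Type*} [TopologicalSpace E] [TopologicalSpace B]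
    (p : C(E, B)) : Prop :=
  ∀ (e₀ : E) (f : C(I, B)), f 0 = p e₀ →
    ∃! g : C(I, E), p.comp g = f ∧ g 0 = e₀

/-- The relation identifying the wedge points of a wedge of copies of `(A, a₀)` indexed by `S`. -/
def wedgeRel (S A : Type*) (a₀ : A) (x y : S × A) : Prop :=
  x = y ∨ (x.2 = a₀ ∧ y.2 = a₀)

/-- The wedge (one-point union) of copies of `(A, a₀)` indexed by `S`. -/
def Wedge (S A : Type*) (a₀ : A) : Type _ :=
  Quot (wedgeRel S A a₀)

/-- The topology of a directed wedge: a set is open iff its trace on each copy of `A`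
is open, and if it contains the wedge point then it contains all copies of `A`
beyond some index. -/
instance Wedge.instTopologicalSpace (S A : Type*) (a₀ : A) [Preorder S]
    [IsDirected S (· ≤ ·)] [TopologicalSpace A] : TopologicalSpace (Wedge S A a₀) where
  IsOpen U := (∀ s : S, IsOpen {a : A | Quot.mk (wedgeRel S A a₀) (s, a) ∈ U}) ∧
    ((∃ s : S, Quot.mk (wedgeRel S A a₀) (s, a₀) ∈ U) →
      ∃ t : S, ∀ s : S, t < s → ∀ a : A, Quot.mk (wedgeRel S A a₀) (s, a) ∈ U)
  isOpen_univ := by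
    refine ⟨fun s => ?_, fun h => ?_⟩
    · exact (isOpen_univ (X := A))
    · obtain ⟨s, -⟩ := h
      exact ⟨s, fun _ _ _ => trivial⟩
  isOpen_inter := by
    rintro U V ⟨hU1, hU2⟩ ⟨hV1, hV2⟩
    refine ⟨fun s => (hU1 s).inter (hV1 s), fun h => ?_⟩
    obtain ⟨tU, htU⟩ := hU2 ⟨h.choose, h.choose_spec.1⟩
    obtain ⟨tV, htV⟩ := hV2 ⟨h.choose, h.choose_spec.2⟩
    obtain ⟨t, ht1, ht2⟩ := directed_of (· ≤ ·) tU tV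
    exact ⟨t, fun s hs a => ⟨htU s (lt_of_le_of_lt ht1 hs) a, htV s (lt_of_le_of_lt ht2 hs) a⟩⟩
  isOpen_sUnion := by
    intro C hC
    constructor
    · intro s
      have : {a : A | Quot.mk (wedgeRel S A a₀) (s, a) ∈ ⋃₀ C} =
          ⋃ U ∈ C, {a : A | Quot.mk (wedgeRel S A a₀) (s, a) ∈ U} := by
        ext a
        simp only [Set.mem_setOf_eq, Set.mem_sUnion, Set.mem_iUnion, exists_prop]
        exact Iff.rfl
      rw [this]
      exact isOpen_biUnion fun U hU => (hC U hU).1 s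
    · rintro ⟨s, hs⟩
      obtain ⟨U, hUC, hsU⟩ := hs
      obtain ⟨t, ht⟩ := (hC U hUC).2 ⟨s, hsU⟩
      exact ⟨t, fun s' hs' a => ⟨U, hUC, ht s' hs' a⟩⟩

/-- An arc-hedgehog over a directed set `S`: the directed wedge of copies of `([0,1], 0)`. -/
def ArcHedgehog (S : Type*) : Type _ := Wedge S I 0

instance (S : Type*) [Preorder S] [IsDirected S (· ≤ ·)] : TopologicalSpace (ArcHedgehog S) :=
  Wedge.instTopologicalSpace S I 0

/-- `p` is an arc-hedgehog covering: maps from arc-hedgehogs lift uniquely. -/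
def IsArcHedgehogCovering {E : Type*} {B : Type*} [TopologicalSpace E] [TopologicalSpace B]
    (p : C(E, B)) : Prop :=
  ∀ (S : Type u) [Preorder S] [IsDirected S (· ≤ ·)],
    ∀ (e₀ : E) (f : C(ArcHedgehog S, B)) (z₀ : ArcHedgehog S), f z₀ = p e₀ →
      ∃! g : C(ArcHedgehog S, E), p.comp g = f ∧ g z₀ = e₀

/-- The closed unit `2`-disk. -/
noncomputable def Disk : Type := Metric.closedBall (0 : EuclideanSpace ℝ (Fin 2)) 1

noncomputable instance : TopologicalSpace Disk := by unfold Disk; infer_instance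

/-- The center of the disk. -/
noncomputable def Disk.center : Disk := ⟨0, by simp⟩

/-- A disk-hedgehog over a directed set `S`: the directed wedge of copies of the pointed disk. -/
def DiskHedgehog (S : Type*) : Type _ := Wedge S Disk Disk.center

noncomputable instance (S : Type*) [Preorder S] [IsDirected S (· ≤ ·)] : TopologicalSpace (DiskHedgehog S) :=
  Wedge.instTopologicalSpace S Disk Disk.center

/-- `p` is a disk-hedgehog covering: maps from disk-hedgehogs lift uniquely. -/
def IsDiskHedgehogCovering {E : Type*} {B : Type*} [TopologicalSpace E] [TopologicalSpace B]
    (p : C(E, B)) : Prop :=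
  ∀ (S : Type u) [Preorder S] [IsDirected S (· ≤ ·)],
    ∀ (e₀ : E) (f : C(DiskHedgehog S, B)) (z₀ : DiskHedgehog S), f z₀ = p e₀ →
      ∃! g : C(DiskHedgehog S, E), p.comp g = f ∧ g z₀ = e₀

/-- `p` is a disk-covering: maps from the closed `2`-disk lift uniquely. -/
def IsDiskCovering {E : Type*} {B : Type*} [TopologicalSpace E] [TopologicalSpace B]
    (p : C(E, B)) : Prop :=
  ∀ (e₀ : E) (f : C(Disk, B)) (d₀ : Disk), f d₀ = p e₀ →
    ∃! g : C(Disk, E), p.comp g = f ∧ g d₀ = e₀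

/-- Path components of preimages of neighborhoods form a neighborhood basis of the
total space. -/
def HedgehogBasisCondition {E : Type*} {B : Type*} [TopologicalSpace E] [TopologicalSpace B]
    (p : C(E, B)) : Prop :=
  ∀ (e₀ : E) (U : Set E), IsOpen U → e₀ ∈ U →
    ∃ V ∈ 𝓝 (p e₀), {y : E | JoinedIn (p ⁻¹' V) e₀ y} ⊆ U

/-- The monodromy relation on loops at `b₀`: two loops are identified iff any two of
their lifts starting at the same point end at the same point. -/
def MonodromyRel {E : Type*} {B : Type*} [TopologicalSpace E] [TopologicalSpace B]
    (p : C(E, B)) (b₀ : B) (α β : Path b₀ b₀) : Prop :=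
  ∀ g h : C(I, E), (∀ t, p (g t) = α t) → (∀ t, p (h t) = β t) →
    g 0 = h 0 → g 1 = h 1

/-- `p` is regular: for each loop in `B`, all lifts are loops or all lifts are non-loops. -/
def IsRegularCovering {E : Type*} {B : Type*} [TopologicalSpace E] [TopologicalSpace B]
    (p : C(E, B)) : Prop :=
  ∀ (b : B) (α : Path b b) (g h : C(I, E)),
    (∀ t, p (g t) = α t) → (∀ t, p (h t) = α t) → g 0 = g 1 → h 0 = h 1

lemma wedge_lift_wd {X : Type*} [TopologicalSpace X] (S' : Type*) (x₀ : X) (α : S' → C(I, X))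
    (h0 : ∀ s, α s 0 = x₀) :
    ∀ a b : S' × I, wedgeRel S' I 0 a b → α a.1 a.2 = α b.1 b.2 := by
  rintro ⟨s, t⟩ ⟨s', t'⟩ (h | ⟨h1, h2⟩)
  · cases h; rfl
  · simp only at h1 h2
    rw [h1, h2, h0, h0]

lemma basis_isDirected {X : Type*} [TopologicalSpace X] (x₀ : X) (S : Set (Set X))
    (hS : ∀ V ∈ S, IsOpen V ∧ x₀ ∈ V)
    (hbasis : ∀ U : Set X, IsOpen U → x₀ ∈ U → ∃ V ∈ S, V ⊆ U) :
    IsDirected (↥S)ᵒᵈ (· ≤ ·) := by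
  constructor
  rintro V W
  obtain ⟨Z, hZS, hZ⟩ := hbasis ((↑(OrderDual.ofDual V) : Set X) ∩ ↑(OrderDual.ofDual W))
    (((hS _ (OrderDual.ofDual V).2).1).inter ((hS _ (OrderDual.ofDual W).2).1))
    ⟨(hS _ (OrderDual.ofDual V).2).2, (hS _ (OrderDual.ofDual W).2).2⟩
  refine ⟨OrderDual.toDual ⟨Z, hZS⟩, ?_, ?_⟩
  · exact fun x hx => (hZ hx).1
  · exact fun x hx => (hZ hx).2

/-!
The topology of a directed wedge makes a wedge map continuous as soon as every spoke is
continuous and the spokes eventually lie in any given neighbourhood of the image of the wedge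
point. For paths `α_V ⊆ V` indexed by a neighbourhood basis of `x₀`, this is exactly the basis
property.
-/

namespace Wedge

variable {S A X : Type*} [Preorder S] [IsDirected S (· ≤ ·)] [TopologicalSpace A]
  [TopologicalSpace X] {a₀ : A} {x₀ : X}

theorem continuous_lift (f : S → A → X) (hf : ∀ s, Continuous (f s)) (hf₀ : ∀ s, f s a₀ = x₀)
    (hconv : ∀ U ∈ 𝓝 x₀, ∀ᶠ s in Filter.atTop, Set.range (f s) ⊆ U)
    (hwd : ∀ p q : S × A, wedgeRel S A a₀ p q → f p.1 p.2 = f q.1 q.2) :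
    Continuous fun z : Wedge S A a₀ => Quot.lift (fun p : S × A => f p.1 p.2) hwd z := by
  refine continuous_def.2 fun U hU => ⟨fun s => (hf s).isOpen_preimage U hU, ?_⟩
  rintro ⟨s, hs⟩
  have : Nonempty S := ⟨s⟩
  have hx₀ : x₀ ∈ U := hf₀ s ▸ hs
  obtain ⟨t, ht⟩ := Filter.eventually_atTop.1 (hconv U (hU.mem_nhds hx₀))
  exact ⟨t, fun s hts a => ht s hts.le ⟨a, rfl⟩⟩

end Wedge

theorem eventually_range_subset_of_basis {X A : Type*} [TopologicalSpace X] {x₀ : X}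
    {S : Set (Set X)} (hbasis : ∀ U : Set X, IsOpen U → x₀ ∈ U → ∃ V ∈ S, V ⊆ U)
    (f : (↥S)ᵒᵈ → A → X) (hf : ∀ V a, f V a ∈ ((OrderDual.ofDual V : ↥S) : Set X)) :
    ∀ U ∈ 𝓝 x₀, ∀ᶠ V in Filter.atTop, Set.range (f V) ⊆ U := by
  intro U hU
  obtain ⟨W, hWU, hW, hx₀⟩ := mem_nhds_iff.1 hU
  obtain ⟨V, hVS, hVW⟩ := hbasis W hW hx₀
  filter_upwards [Filter.eventually_ge_atTop (OrderDual.toDual ⟨V, hVS⟩)] with V' hV'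
  have hV'V : ((OrderDual.ofDual V' : ↥S) : Set X) ⊆ V := hV'
  rintro _ ⟨a, rfl⟩
  exact hWU (hVW (hV'V (hf V' a)))

/-- a family of paths starting at `x₀` indexed by a neighborhood basis of
`x₀` (directed by reverse inclusion), with `α_V` contained in `V`, induces a continuous
wedge map from the arc-hedgehog over the basis. -/
theorem hedgehog_wedge_map_continuous {X : Type u} [TopologicalSpace X] (x₀ : X)
    (S : Set (Set X))
    (hS : ∀ V ∈ S, IsOpen V ∧ x₀ ∈ V)
    (hbasis : ∀ U : Set X, IsOpen U → x₀ ∈ U → ∃ V ∈ S, V ⊆ U)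
    (α : ↥S → C(I, X))
    (h0 : ∀ V, α V 0 = x₀)
    (hin : ∀ (V : ↥S) (t : I), α V t ∈ (V : Set X)) :
    haveI : IsDirected (↥S)ᵒᵈ (· ≤ ·) := basis_isDirected x₀ S hS hbasis
    Continuous (fun z : ArcHedgehog (↥S)ᵒᵈ =>
      Quot.lift (fun q : (↥S)ᵒᵈ × I => α (OrderDual.ofDual q.1) q.2)
        (wedge_lift_wd (↥S)ᵒᵈ x₀ (fun s => α (OrderDual.ofDual s))
          (fun s => h0 (OrderDual.ofDual s))) z) := by
  have := basis_isDirected x₀ S hS hbasis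
  exact Wedge.continuous_lift (fun V => α (OrderDual.ofDual V))
    (fun V => (α _).continuous) (fun V => h0 _)
    (eventually_range_subset_of_basis hbasis _ fun V => hin _) _
end

section
/- Let p : E → B be an arc-covering. Then p is an arc-hedgehog covering if and only if for every e₀ ∈ E and every open U ⊆ E containing e₀, there exists a neighborhood V of p(e₀) in B such that the path component of p⁻¹(V) containing e₀ is contained in U. -/
open unitInterval Topology

set_option linter.unnecessarySimpa false

universe u v w

/-!
(⇐) Lift every spine of the hedgehog to a path starting at one point over the wedge point. The
lifts glue to a continuous map: for an open `U` around that point, the basis condition yields a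
neighbourhood `V` of its image, the spines beyond some index map into `V`, and their lifts then
lie in the path component of `p ⁻¹' V`, hence in `U`. Uniqueness is uniqueness of path lifts.

(⇒) If the condition fails at `e₀` and `U`, choose for every neighbourhood `V` of `p e₀` a path
in `p ⁻¹' V` from `e₀` to a point outside `U`. Their projections form a continuous map on a
hedgehog indexed by the neighbourhoods, whose unique lift is the wedge of these paths; its
continuity at the wedge point would force the endpoints into `U`.
-/
open Set Filter ContinuousMap

instance unitInterval.instPathConnectedSpace : PathConnectedSpace I :=
  isPathConnected_iff_pathConnectedSpace.mp <|
    (convex_Icc (0 : ℝ) 1).isPathConnected ⟨0, by simp⟩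

instance Filter.instSemilatticeInfMem {α : Type*} (l : Filter α) :
    SemilatticeInf {s : Set α // s ∈ l} :=
  Subtype.semilatticeInf fun _ _ => inter_mem

section ArcCovering

variable {E B : Type*} [TopologicalSpace E] [TopologicalSpace B] {p : C(E, B)}

theorem IsArcCovering.eq_of_comp_eq (hp : IsArcCovering p) {g h : C(I, E)}
    (hgh : p.comp g = p.comp h) {t₀ : I} (ht₀ : g t₀ = h t₀) : g = h := by
  ext t
  let r : C(I, I) := PathConnectedSpace.somePath t₀ t
  have : g.comp r = h.comp r :=
    (hp (g t₀) ((p.comp g).comp r) (by simp [r])).unique ⟨comp_assoc .., by simp [r]⟩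
      ⟨by rw [← comp_assoc, ← hgh, comp_assoc], by simp [r, ht₀]⟩
  simpa [r] using congr($this 1)

theorem IsArcCovering.exists_lift_apply_eq (hp : IsArcCovering p) (f : C(I, B)) {t₀ : I}
    {e : E} (he : f t₀ = p e) : ∃ g : C(I, E), p.comp g = f ∧ g t₀ = e := by
  let r : C(I, I) := PathConnectedSpace.somePath t₀ 0
  obtain ⟨δ, ⟨hδ, hδ0⟩, -⟩ := hp e (f.comp r) (by simp [r, he])
  obtain ⟨g, ⟨hg, hg0⟩, -⟩ := hp (δ 1) f (by simpa [r] using congr($hδ 1).symm)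
  have : g.comp r = δ :=
    hp.eq_of_comp_eq (by rw [← comp_assoc, hg, hδ]) (t₀ := 1) (by simp [r, hg0])
  exact ⟨g, hg, by simpa [r, hδ0] using congr($this 0)⟩

end ArcCovering

namespace Wedge

variable {S A X : Type*} [Preorder S] [IsDirected S (· ≤ ·)] [TopologicalSpace A]
  [TopologicalSpace X] {a₀ : A}

variable (a₀) in
def incl (s : S) : C(A, Wedge S A a₀) where
  toFun a := Quot.mk _ (s, a)
  continuous_toFun := continuous_def.mpr fun _ hU => hU.1 s

theorem incl_base (s t : S) : incl a₀ s a₀ = incl a₀ t a₀ :=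
  Quot.sound (Or.inr ⟨rfl, rfl⟩)

theorem exists_incl_eq (z : Wedge S A a₀) : ∃ s a, incl a₀ s a = z := by
  obtain ⟨⟨s, a⟩, rfl⟩ := Quot.exists_rep z
  exact ⟨s, a, rfl⟩

theorem hom_ext {g h : C(Wedge S A a₀, X)}
    (hgh : ∀ s, g.comp (incl a₀ s) = h.comp (incl a₀ s)) : g = h := by
  ext z
  obtain ⟨s, a, rfl⟩ := exists_incl_eq z
  exact congr($(hgh s) a)

theorem exists_forall_mem_of_mem_nhds (g : C(Wedge S A a₀, X)) {s : S} {W : Set X}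
    (hW : W ∈ 𝓝 (g (incl a₀ s a₀))) : ∃ t, ∀ s', t < s' → ∀ a, g (incl a₀ s' a) ∈ W := by
  obtain ⟨W', hW'W, hW', hsW'⟩ := mem_nhds_iff.mp hW
  obtain ⟨t, ht⟩ := (hW'.preimage g.continuous).2 ⟨s, hsW'⟩
  exact ⟨t, fun s' hs' a => hW'W (ht s' hs' a)⟩

def desc (g : S → C(A, X)) (x₀ : X) (hbase : ∀ s, g s a₀ = x₀)
    (htail : ∀ W ∈ 𝓝 x₀, ∃ t, ∀ s, t < s → ∀ a, g s a ∈ W) : C(Wedge S A a₀, X) where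
  toFun := Quot.lift (fun x => g x.1 x.2) <| by
    rintro x y (rfl | ⟨hx, hy⟩)
    · rfl
    · simp only [hx, hy, hbase]
  continuous_toFun := continuous_def.mpr fun W hW =>
    ⟨fun s => hW.preimage (g s).continuous, fun ⟨s, hs⟩ =>
      htail W (hW.mem_nhds (hbase s ▸ hs))⟩

@[simp]
theorem desc_incl (g : S → C(A, X)) (x₀ : X) (hbase : ∀ s, g s a₀ = x₀)
    (htail : ∀ W ∈ 𝓝 x₀, ∃ t, ∀ s, t < s → ∀ a, g s a ∈ W) (s : S) (a : A) :
    desc g x₀ hbase htail (incl a₀ s a) = g s a :=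
  rfl

end Wedge

section Hedgehog

variable {E B : Type*} [TopologicalSpace E] [TopologicalSpace B] {p : C(E, B)}
  {S : Type*} [Preorder S] [IsDirected S (· ≤ ·)]

theorem IsArcCovering.hedgehog_eq_of_comp_eq (hp : IsArcCovering p) {G G' : C(Wedge S I 0, E)}
    (hGG' : p.comp G = p.comp G') {z₀ : Wedge S I 0} (hz₀ : G z₀ = G' z₀) : G = G' := by
  obtain ⟨s₀, t₀, rfl⟩ := Wedge.exists_incl_eq z₀
  have hs₀ : G.comp (Wedge.incl 0 s₀) = G'.comp (Wedge.incl 0 s₀) :=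
    hp.eq_of_comp_eq (by rw [← comp_assoc, hGG', comp_assoc]) hz₀
  refine Wedge.hom_ext fun s =>
    hp.eq_of_comp_eq (by rw [← comp_assoc, hGG', comp_assoc]) (t₀ := 0) ?_
  simpa [Wedge.incl_base s s₀] using congr($hs₀ 0)

theorem HedgehogBasisCondition.exists_lift_of_base (hb : HedgehogBasisCondition p)
    (hp : IsArcCovering p) (f : C(Wedge S I 0, B)) (s₀ : S) {e : E}
    (he : f (Wedge.incl 0 s₀ 0) = p e) :
    ∃ G : C(Wedge S I 0, E), p.comp G = f ∧ G (Wedge.incl 0 s₀ 0) = e := by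
  have he' (s : S) : (f.comp (Wedge.incl 0 s)) 0 = p e := by
    rw [comp_apply, Wedge.incl_base s s₀, he]
  choose g hg hg0 using fun s => (hp e _ (he' s)).exists
  refine ⟨Wedge.desc g e hg0 fun U hU => ?_, Wedge.hom_ext fun s => ?_, hg0 s₀⟩
  · obtain ⟨V, hV, hVU⟩ :=
      hb e (interior U) isOpen_interior (mem_interior_iff_mem_nhds.mpr hU)
    obtain ⟨t, ht⟩ := Wedge.exists_forall_mem_of_mem_nhds f (he ▸ interior_mem_nhds.mpr hV)
    refine ⟨t, fun s hs a => interior_subset (hVU ?_)⟩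
    have hspine : MapsTo (g s) univ (p ⁻¹' V) := fun a _ => by
      rw [mem_preimage, ← comp_apply, hg s]
      exact interior_subset (ht s hs a)
    simpa [hg0] using (((joinedIn_univ.mpr (PathConnectedSpace.joined 0 a)).map
      (g s).continuous).mono hspine.image_subset)
  · exact hg s

theorem isArcHedgehogCovering_iff_wedge : IsArcHedgehogCovering.{u} p ↔
      ∀ (S : Type u) [Preorder S] [IsDirected S (· ≤ ·)] (e₀ : E) (f : C(Wedge S I 0, B))
        (z₀ : Wedge S I 0), f z₀ = p e₀ → ∃! G : C(Wedge S I 0, E), p.comp G = f ∧ G z₀ = e₀ :=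
  Iff.rfl

theorem HedgehogBasisCondition.isArcHedgehogCovering (hb : HedgehogBasisCondition p)
    (hp : IsArcCovering p) : IsArcHedgehogCovering.{u} p := by
  refine isArcHedgehogCovering_iff_wedge.mpr fun S _ _ e₀ f z₀ hz₀ => ?_
  obtain ⟨s₀, t₀, rfl⟩ := Wedge.exists_incl_eq z₀
  obtain ⟨g, hg, hgt₀⟩ := hp.exists_lift_apply_eq (f.comp (Wedge.incl 0 s₀)) hz₀
  obtain ⟨G, hGf, hG⟩ := hb.exists_lift_of_base hp f s₀ (e := g 0) congr($hg 0).symm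
  have hGg : G.comp (Wedge.incl 0 s₀) = g :=
    hp.eq_of_comp_eq (by rw [← comp_assoc, hGf, hg]) (t₀ := 0) hG
  have hGt₀ : G (Wedge.incl 0 s₀ t₀) = e₀ := by simpa [hgt₀] using congr($hGg t₀)
  exact ⟨G, ⟨hGf, hGt₀⟩, fun G' ⟨hG'f, hG't₀⟩ =>
    hp.hedgehog_eq_of_comp_eq (hG'f.trans hGf.symm) (hG't₀.trans hGt₀.symm)⟩

end Hedgehog

/-- Neighbourhoods of `b` under reverse inclusion; the `ℕ` factor gives every index a strict
successor, which matters because the wedge topology only constrains spines strictly beyond an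
index. -/
abbrev NhdsSpineIndex {B : Type*} [TopologicalSpace B] (b : B) : Type _ :=
  {V : Set B // V ∈ 𝓝 b}ᵒᵈ × ℕ

theorem IsArcHedgehogCovering.hedgehogBasisCondition {E : Type*} {B : Type u}
    [TopologicalSpace E] [TopologicalSpace B] {p : C(E, B)} (hcov : IsArcHedgehogCovering.{u} p)
    (hp : IsArcCovering p) : HedgehogBasisCondition p := by
  intro e₀ U hU he₀
  by_contra! hU_small
  choose y hy hyU using fun V : {V : Set B // V ∈ 𝓝 (p e₀)} => not_subset.mp (hU_small V V.2)
  let γ (s : NhdsSpineIndex (p e₀)) : Path e₀ (y s.1) := (hy s.1).somePath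
  let F : C(Wedge (NhdsSpineIndex (p e₀)) I 0, B) :=
    Wedge.desc (a₀ := 0) (fun s => p.comp (γ s)) (p e₀) (by simp) fun W hW =>
      ⟨(OrderDual.toDual ⟨W, hW⟩, 0), fun s hs a => hs.le.1 ((hy s.1).somePath_mem a)⟩
  let s₀ : NhdsSpineIndex (p e₀) := (OrderDual.toDual ⟨univ, univ_mem⟩, 0)
  obtain ⟨G, ⟨hGF, hG⟩, -⟩ :=
    isArcHedgehogCovering_iff_wedge.mp hcov _ e₀ F (Wedge.incl 0 s₀ 0) (by simp [F])
  have hGγ (s : NhdsSpineIndex (p e₀)) : G.comp (Wedge.incl 0 s) = γ s := by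
    refine hp.eq_of_comp_eq (by rw [← comp_assoc, hGF]; rfl) (t₀ := 0) ?_
    simp [Wedge.incl_base s s₀, hG, γ]
  obtain ⟨t, ht⟩ := Wedge.exists_forall_mem_of_mem_nhds G (hU.mem_nhds (hG ▸ he₀))
  have hG_succ : G (Wedge.incl 0 (t.1, t.2 + 1) 1) ∈ U :=
    ht _ (Prod.mk_lt_mk_of_le_of_lt le_rfl t.2.lt_succ_self) 1
  have hG_succ_eq : G (Wedge.incl 0 (t.1, t.2 + 1) 1) = y t.1 := by
    simpa [γ] using congr($(hGγ (t.1, t.2 + 1)) 1)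
  exact hyU t.1 (hG_succ_eq ▸ hG_succ)

/-- an arc-covering is an arc-hedgehog covering iff path components of
preimages of neighborhoods form a neighborhood basis of the total space. -/
theorem arcHedgehogCovering_iff_basisCondition {E B : Type u} [TopologicalSpace E]
    [TopologicalSpace B] (p : C(E, B)) (hp : IsArcCovering p) :
    IsArcHedgehogCovering.{u} p ↔ HedgehogBasisCondition p :=
  ⟨fun hcov => hcov.hedgehogBasisCondition hp, fun hb => hb.isArcHedgehogCovering hp⟩
end

section
/- Let p : E → B be a regular arc-hedgehog covering of Peano spaces. Then p is trivial at b₀ (there is a connected neighborhood U of b₀ such that p maps each path component of p⁻¹(U) homeomorphically onto U) if and only if the fiber p⁻¹(b₀) contains an isolated point. -/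
open unitInterval Topology

set_option linter.unnecessarySimpa false

universe u v w

/-!
Let `C` be the path component of `e` in `p⁻¹(U)`, for `U` a small path-connected open
neighbourhood of `b₀ = p e`. If `e` is isolated in its fibre, it is the only point of `C` over
`b₀`, and unique path lifting makes `p` injective on `C`. Regularity transports this isolation to
every path component of `p⁻¹(U)`, so `p` is injective on each of them; path lifting makes it
surjective onto `U`, and the basis condition makes `p` an open map, so each component maps
homeomorphically onto `U`. Conversely, a trivialisation over `U` shows that `e` is the only point
of the fibre in the open path component of `e` in `p⁻¹(int U)`.
-/

open Set

theorem Set.BijOn.exists_homeomorph {X Y : Type*} [TopologicalSpace X] [TopologicalSpace Y]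
    {f : X → Y} {s : Set X} {t : Set Y} (hf : Continuous f) (hfo : IsOpenMap f) (hs : IsOpen s)
    (h : BijOn f s t) : ∃ g : s ≃ₜ t, ∀ x, (g x : Y) = f x :=
  ⟨(h.equiv f).toHomeomorphOfContinuousOpen (hf.restrict h.mapsTo)
    ((hfo.domRestrict hs).codRestrict _), fun _ => rfl⟩

section Lifting

variable {E B : Type*} [TopologicalSpace E] [TopologicalSpace B] {p : C(E, B)}

theorem IsArcCovering.exists_path_lift (hp : IsArcCovering p) {a b : B} (γ : Path a b) {e : E}
    (he : p e = a) : ∃ z, p z = b ∧ ∃ δ : Path e z, ∀ t, p (δ t) = γ t := by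
  obtain ⟨g, ⟨hpg, hg0⟩, -⟩ := hp e γ.toContinuousMap (by simp [he])
  have hlift : ∀ t, p (g t) = γ t := fun t => ContinuousMap.congr_fun hpg t
  exact ⟨g 1, by simpa using hlift 1, ⟨g, hg0, rfl⟩, hlift⟩

theorem IsArcCovering.eq_of_path_lifts (hp : IsArcCovering p) {e y y' : E} (δ : Path e y)
    (δ' : Path e y') (h : ∀ t, p (δ t) = p (δ' t)) : y = y' := by
  have hδ : δ.toContinuousMap = δ'.toContinuousMap :=
    (hp e (p.comp δ.toContinuousMap) (by simp)).unique ⟨rfl, δ.source⟩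
      ⟨ContinuousMap.ext fun t => (h t).symm, δ'.source⟩
  simpa using ContinuousMap.congr_fun hδ 1

theorem IsArcCovering.exists_mem_pathComponentIn_lift (hp : IsArcCovering p) {U : Set B} {e : E}
    {b : B} (h : JoinedIn U (p e) b) : ∃ z ∈ pathComponentIn (p ⁻¹' U) e, p z = b := by
  obtain ⟨γ, hγ⟩ := h
  obtain ⟨z, hz, δ, hδ⟩ := hp.exists_path_lift γ rfl
  exact ⟨z, ⟨δ, fun t => by simpa [hδ t] using hγ t⟩, hz⟩

theorem IsArcCovering.surjOn_pathComponentIn (hp : IsArcCovering p) {U : Set B}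
    (hU : IsPathConnected U) {e : E} (he : p e ∈ U) : SurjOn p (pathComponentIn (p ⁻¹' U) e) U :=
  fun _ hb => hp.exists_mem_pathComponentIn_lift (hU.joinedIn _ he _ hb)

theorem IsArcCovering.surjective [PathConnectedSpace B] [Nonempty E] (hp : IsArcCovering p) :
    Function.Surjective p := by
  intro b
  obtain ⟨e⟩ := ‹Nonempty E›
  obtain ⟨z, -, hz⟩ := hp.surjOn_pathComponentIn isPathConnected_univ (mem_univ (p e)) (mem_univ b)
  exact ⟨z, hz⟩

theorem HedgehogBasisCondition.isOpenMap [LocallyPathConnectedSpace B] (hp : IsArcCovering p)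
    (hbasis : HedgehogBasisCondition p) : IsOpenMap p := by
  intro O hO
  rw [isOpen_iff_mem_nhds]
  rintro _ ⟨y, hyO, rfl⟩
  obtain ⟨V, hV, hVO⟩ := hbasis y O hO hyO
  refine Filter.mem_of_superset (pathComponentIn_mem_nhds hV) fun b hb => ?_
  obtain ⟨z, hz, rfl⟩ := hp.exists_mem_pathComponentIn_lift hb
  exact ⟨z, hVO hz, rfl⟩

/-- Unique path lifting alone: the reversed projection of a path `e ⤳ y'` lifts from `y` to a
path ending over `p e`, hence at `e`, whose reverse must then be the original path. -/
theorem IsArcCovering.injOn_pathComponentIn (hp : IsArcCovering p) {U : Set B} {e : E}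
    (hiso : ∀ z ∈ pathComponentIn (p ⁻¹' U) e, p z = p e → z = e) :
    InjOn p (pathComponentIn (p ⁻¹' U) e) := by
  intro y hy y' ⟨γ', hγ'⟩ hpy
  obtain ⟨z, hz, δ, hδ⟩ := hp.exists_path_lift (γ'.map p.continuous).symm hpy
  have hzC : z ∈ pathComponentIn (p ⁻¹' U) e :=
    JoinedIn.trans hy ⟨δ, fun t => by simpa [hδ t] using hγ' _⟩
  obtain rfl := hiso z hzC (by simpa using hz)
  exact hp.eq_of_path_lifts δ.symm γ' fun t => by simp [hδ]

/-- The loop `p ∘ γ` at `p e'`, for `γ : e' ⤳ z`, has a closed lift at `w`, so by regularity `γ`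
is closed too. -/
theorem IsRegularCovering.eq_of_mem_pathComponentIn (hreg : IsRegularCovering p)
    (hp : IsArcCovering p) {U : Set B} {e w e' z : E}
    (hinj : InjOn p (pathComponentIn (p ⁻¹' U) e)) (hw : w ∈ pathComponentIn (p ⁻¹' U) e)
    (hpw : p w = p e') (hz : z ∈ pathComponentIn (p ⁻¹' U) e') (hpz : p z = p e') : z = e' := by
  obtain ⟨γ, hγ⟩ := hz
  let α : Path (p e') (p e') := (γ.map p.continuous).cast rfl hpz.symm
  obtain ⟨w', hw', δ, hδ⟩ := hp.exists_path_lift α hpw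
  have hw'C : w' ∈ pathComponentIn (p ⁻¹' U) e :=
    hw.trans ⟨δ, fun t => by simpa [hδ t, α] using hγ t⟩
  have hclosed : w = w' := hinj hw hw'C (hpw.trans hw'.symm)
  simpa using (hreg (p e') α δ.toContinuousMap γ.toContinuousMap hδ (fun _ => rfl)
    (by simpa using hclosed)).symm

theorem IsRegularCovering.injOn_pathComponentIn (hreg : IsRegularCovering p)
    (hp : IsArcCovering p) {U : Set B} (hU : IsPathConnected U) {e : E} (he : p e ∈ U)
    (hiso : ∀ z ∈ pathComponentIn (p ⁻¹' U) e, p z = p e → z = e) {e' : E} (he' : p e' ∈ U) :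
    InjOn p (pathComponentIn (p ⁻¹' U) e') := by
  obtain ⟨w, hw, hpw⟩ := hp.surjOn_pathComponentIn hU he he'
  exact hp.injOn_pathComponentIn fun z hz hpz =>
    hreg.eq_of_mem_pathComponentIn hp (hp.injOn_pathComponentIn hiso) hw hpw hz hpz

theorem IsArcCovering.exists_homeomorph_pathComponentIn [LocallyPathConnectedSpace E]
    [LocallyPathConnectedSpace B] (hp : IsArcCovering p) (hbasis : HedgehogBasisCondition p)
    {U : Set B} (hUo : IsOpen U) (hU : IsPathConnected U) {e : E} (he : p e ∈ U)
    (hinj : InjOn p (pathComponentIn (p ⁻¹' U) e)) :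
    ∃ h : pathComponentIn (p ⁻¹' U) e ≃ₜ U, ∀ z, (h z : B) = p z :=
  BijOn.exists_homeomorph p.continuous (hbasis.isOpenMap hp)
    ((hUo.preimage p.continuous).pathComponentIn e)
    ⟨fun _ hz => pathComponentIn_subset (F := p ⁻¹' U) hz, hinj, hp.surjOn_pathComponentIn hU he⟩

theorem exists_isOpen_inter_fiber_eq_singleton [LocallyPathConnectedSpace E] {U : Set B} {e : E}
    (hU : U ∈ 𝓝 (p e)) (h : pathComponentIn (p ⁻¹' U) e ≃ₜ U) (hh : ∀ z, (h z : B) = p z) :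
    ∃ V : Set E, IsOpen V ∧ V ∩ p ⁻¹' {p e} = {e} := by
  have he : e ∈ p ⁻¹' interior U := mem_interior_iff_mem_nhds.2 hU
  refine ⟨pathComponentIn (p ⁻¹' interior U) e,
    (isOpen_interior.preimage p.continuous).pathComponentIn e, ?_⟩
  refine eq_singleton_iff_unique_mem.2 ⟨⟨mem_pathComponentIn_self he, rfl⟩, ?_⟩
  rintro z ⟨hz, hpz⟩
  have hzC := pathComponentIn_mono (preimage_mono interior_subset) hz
  have heC := pathComponentIn_mono (preimage_mono interior_subset) (mem_pathComponentIn_self he)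
  have : h ⟨z, hzC⟩ = h ⟨e, heC⟩ := Subtype.ext (by rw [hh, hh]; exact hpz)
  exact congrArg Subtype.val (h.injective this)

end Lifting

/-- a regular arc-hedgehog covering of Peano spaces is trivial at `b₀`
iff the fiber over `b₀` has an isolated point. -/
theorem trivial_iff_isolated_point {E B : Type*} [TopologicalSpace E] [TopologicalSpace B]
    [ConnectedSpace E] [LocallyPathConnectedSpace E] [ConnectedSpace B]
    [LocallyPathConnectedSpace B]
    (p : C(E, B)) (hp : IsArcCovering p) (hbasis : HedgehogBasisCondition p)
    (hreg : IsRegularCovering p) (b₀ : B) :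
    (∃ U ∈ nhds b₀, IsConnected U ∧ ∀ e : E, p e ∈ U →
      ∃ h : ↥{y : E | JoinedIn (p ⁻¹' U) e y} ≃ₜ ↥U, ∀ z, (h z : B) = p (z : E)) ↔
    (∃ e : E, p e = b₀ ∧ ∃ V : Set E, IsOpen V ∧ V ∩ p ⁻¹' {b₀} = {e}) := by
  constructor
  · rintro ⟨U, hU, -, htriv⟩
    have : PathConnectedSpace B := pathConnectedSpace_iff_connectedSpace.2 ‹_›
    obtain ⟨e, rfl⟩ := hp.surjective b₀
    obtain ⟨h, hh⟩ := htriv e (mem_of_mem_nhds hU)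
    exact ⟨e, rfl, exists_isOpen_inter_fiber_eq_singleton hU h hh⟩
  · rintro ⟨e, rfl, V, hVo, hV⟩
    obtain ⟨W, hW, hWV⟩ := hbasis e V hVo (hV.symm.subset rfl).1
    have heW : p e ∈ interior W := mem_interior_iff_mem_nhds.2 hW
    set U := pathComponentIn (interior W) (p e)
    have hUo : IsOpen U := isOpen_interior.pathComponentIn _
    have hU : IsPathConnected U := isPathConnected_pathComponentIn heW
    have heU : p e ∈ U := mem_pathComponentIn_self heW
    have hiso : ∀ z ∈ pathComponentIn (p ⁻¹' U) e, p z = p e → z = e := fun z hz hpz =>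
      hV.subset ⟨hWV (pathComponentIn_mono (preimage_mono
        (pathComponentIn_subset.trans interior_subset)) hz), hpz⟩
    refine ⟨U, hUo.mem_nhds heU, hU.isConnected, fun e' he' => ?_⟩
    exact hp.exists_homeomorph_pathComponentIn hbasis hUo hU he'
      (hreg.injOn_pathComponentIn hp hU heU hiso he')
end
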